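/- Suppose the degree-4 real polynomial p(λ) = λ⁴ - (S/2)λ² - (f₃/3)λ + K with S > 0 and f₃ ≥ 0 has a double real root r and two other real roots r₁ < r₂ distinct from r and from each other, with r₁ = r₂ being excluded; if r is the largest root (r₁ < r₂ < r = double root, i.e., roots λ₁ < λ₂ < λ₃ = λ₄ = r), then f₃ = -6r(S/2 - 2r²) and if additionally r > 0 with S/2 - 2r² > 0 then f₃ < 0, a contradiction; hence the double root cannot be the largest positive root. -/
import Mathlib


/-- If the characteristic polynomial has roots `λ₁ < λ₂ < λ₃ = λ₄ = r`, then
`f₃ = -6r(S/2 - 2r²)`, and if moreover `r > 0` with `S/2 - 2r² > 0` then `f₃ < 0`;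
hence under `f₃ ≥ 0` the double root cannot be the largest positive root. -/
theorem stmt_14 (S f3 K l1 l2 r : ℝ) (hS : 0 < S) (hf3 : 0 ≤ f3)
    (h12 : l1 < l2) (h2r : l2 < r)
    (hroots : ∀ x : ℝ,
      x ^ 4 - S / 2 * x ^ 2 - f3 / 3 * x + K = (x - l1) * (x - l2) * (x - r) ^ 2) :
    f3 = -6 * r * (S / 2 - 2 * r ^ 2) ∧
      (0 < r → 0 < S / 2 - 2 * r ^ 2 → f3 < 0) ∧
      ¬(0 < r ∧ 0 < S / 2 - 2 * r ^ 2) := by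
  have key : f3 = -6 * r * (S / 2 - 2 * r ^ 2) := by
    have h0 := hroots 0
    have h1 := hroots 1
    have hm1 := hroots (-1)
    have h2 := hroots 2
    have hm2 := hroots (-2)
    linear_combination (-(2:ℝ) - 3*r + 2*r^2 - r^2/2) * h1 + (2 - 3*r - 2*r^2 + r^2/2) * hm1 +
      (6*r) * h0 + (1/4 - r^2 + r^2/4) * h2 + (r^2 - 1/4 - r^2/4) * hm2
  refine ⟨key, ?_, ?_⟩
  · intro hr hpos
    nlinarith [mul_pos hr hpos]
  · rintro ⟨hr, hpos⟩
    nlinarith [mul_pos hr hpos]
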